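/- arXiv:0807.2155 — 2 statements merged into one kernel-verified Lean document; each statement's English description precedes it below -/
import Mathlib

section
/- Fix a real number q with 0 < q < 1. For all X ∈ ℂ and all Λ ∈ ℂ with Λ ∉ {0, 1, −1}, the global q-Whittaker function Ψ̃ of type A₁ satisfies the dual difference equation −q^{1/4} · ( Ψ̃(X, q^{1/2}Λ) − Ψ̃(X, q^{−1/2}Λ) ) / (Λ − Λ^{−1}) = X · Ψ̃(X, Λ). (Equation (4.28) of the paper, the Λ-dependence from Theorem 3.2(ii) in the rank-one case.) -/
open scoped BigOperators
open Filter

noncomputable section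

/-- Symmetric monomial `M_r(X) = X^r + X^{-r}` for `r ≥ 1`, `M_0 = 1`. -/
def Msym (r : ℕ) (X : ℂ) : ℂ := if r = 0 then 1 else X ^ r + X⁻¹ ^ r

/-- Continuous q-Hermite Laurent polynomial (Macdonald polynomial of type A₁ at t = 0). -/
def PbarA1 (q : ℝ) (n : ℕ) (X : ℂ) : ℂ :=
  Msym n X + ∑ j ∈ Finset.Icc 1 (n / 2),
    (∏ i ∈ Finset.range j, (1 - (q : ℂ) ^ (n - i)) / (1 - (q : ℂ) ^ (i + 1))) *
      Msym (n - 2 * j) X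

/-- Global q-Whittaker function of type A₁. -/
def whitA1 (q : ℝ) (X Λ : ℂ) : ℂ :=
  ∑' n : ℕ, ((q ^ ((n : ℝ) ^ 2 / 4) : ℝ) : ℂ) * X ^ n * PbarA1 q n Λ /
    ∏ j ∈ Finset.Icc 1 n, (1 - (q : ℂ) ^ j)

/-- Theta function `θ(Λ) = ∑_{j ∈ ℤ} q^{j²/4} Λ^j`. -/
def thetaA1 (q : ℝ) (Λ : ℂ) : ℂ :=
  ∑' j : ℤ, ((q ^ ((j : ℝ) ^ 2 / 4) : ℝ) : ℂ) * Λ ^ j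

/-- Rogers Laurent polynomial (symmetric Macdonald polynomial of type A₁). -/
def RogersA1 (q : ℝ) (t : ℂ) (n : ℕ) (X : ℂ) : ℂ :=
  Msym n X + ∑ j ∈ Finset.Icc 1 (n / 2),
    (∏ i ∈ Finset.range j,
      ((1 - (q : ℂ) ^ (n - i)) * (1 - t * (q : ℂ) ^ i)) /
      ((1 - (q : ℂ) ^ (1 + i)) * (1 - t * (q : ℂ) ^ (n - i - 1)))) *
    Msym (n - 2 * j) X

/-- Global q,t-spherical function of type A₁, with `t = s²`. -/
def sphA1 (q s : ℝ) (X Λ : ℂ) : ℂ :=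
  ∑' n : ℕ, (s : ℂ) ^ n * ((q ^ ((n : ℝ) ^ 2 / 4) : ℝ) : ℂ) *
    RogersA1 q ((s : ℂ) ^ 2) n X * RogersA1 q ((s : ℂ) ^ 2) n Λ *
    ∏ i ∈ Finset.range n,
      ((1 - (s : ℂ) ^ 2 * (q : ℂ) ^ i) * (1 - (s : ℂ) ^ 2 * (q : ℂ) ^ (i + 1))) /
      ((1 - ((s : ℂ) ^ 2) ^ 2 * (q : ℂ) ^ i) * (1 - (q : ℂ) ^ (i + 1)))

/-- Macdonald truncated theta weight function of type A₁. -/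
def muA1 (q : ℝ) (t : ℂ) (X : ℂ) : ℂ :=
  ∏' j : ℕ, ((1 - X ^ 2 * (q : ℂ) ^ j) * (1 - X⁻¹ ^ 2 * (q : ℂ) ^ (j + 1))) /
    ((1 - t * X ^ 2 * (q : ℂ) ^ j) * (1 - t * X⁻¹ ^ 2 * (q : ℂ) ^ (j + 1)))

/-!
Write `P̄ₙ(Λ) = ∑ₖ [n k]_q Λⁿ⁻ᵏ Λ⁻ᵏ`, a homogeneous Rogers–Szegő polynomial evaluated at `(Λ, Λ⁻¹)`.
The dilations `Λ ↦ q^{±1/2} Λ` multiply the `k`-th monomial by `q^{±(n-2k)/2}`, and the two q-Pascal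
rules `[n+1 k] (1 - q^{n+1-k}) = (1 - q^{n+1}) [n k] = [n+1 k+1] (1 - q^{k+1})` then give
`-q^{1/4} (P̄ₙ₊₁(q^{1/2} Λ) - P̄ₙ₊₁(q^{-1/2} Λ)) = q^{-(2n+1)/4} (1 - q^{n+1}) (Λ - Λ⁻¹) P̄ₙ(Λ)`.
The factor `1 - q^{n+1}` cancels against `(q; q)ₙ₊₁` and `q^{(n+1)²/4} q^{-(2n+1)/4} = q^{n²/4}`, so the
`(n+1)`-st term of the left-hand side is `(Λ - Λ⁻¹) X` times the `n`-th term of `Ψ̃(X, Λ)`, while the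
constant terms cancel.
-/

open Finset Topology

section QBinomial

variable {K : Type*} [Field K] {q : K}

def qBinom (q : K) (n k : ℕ) : K :=
  ∏ i ∈ range k, (1 - q ^ (n - i)) / (1 - q ^ (i + 1))

def qFactorial (q : K) (n : ℕ) : K :=
  ∏ j ∈ Icc 1 n, (1 - q ^ j)

def rogersSzego (q : K) (n : ℕ) (u v : K) : K :=
  ∑ k ∈ range (n + 1), qBinom q n k * u ^ (n - k) * v ^ k

lemma one_sub_pow_ne_zero (hq : ¬IsOfFinOrder q) {j : ℕ} (hj : 0 < j) : 1 - q ^ j ≠ 0 :=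
  sub_ne_zero.mpr fun h => hq (isOfFinOrder_iff_pow_eq_one.mpr ⟨j, hj, h.symm⟩)

lemma qFactorial_succ (q : K) (n : ℕ) :
    qFactorial q (n + 1) = qFactorial q n * (1 - q ^ (n + 1)) :=
  prod_Icc_succ_top (by omega) _

lemma qFactorial_eq_prod_range (q : K) (n : ℕ) :
    qFactorial q n = ∏ i ∈ range n, (1 - q ^ (i + 1)) := by
  induction n with
  | zero => simp [qFactorial]
  | succ n ih => rw [qFactorial_succ, ih, prod_range_succ]

lemma qFactorial_ne_zero (hq : ¬IsOfFinOrder q) (n : ℕ) : qFactorial q n ≠ 0 :=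
  prod_ne_zero_iff.mpr fun _ hj => one_sub_pow_ne_zero hq (mem_Icc.mp hj).1

lemma prod_range_one_sub_pow_mul_qFactorial (q : K) {n k : ℕ} (hk : k ≤ n) :
    (∏ i ∈ range k, (1 - q ^ (n - i))) * qFactorial q (n - k) = qFactorial q n := by
  induction k with
  | zero => simp
  | succ k ih =>
    have hnk : n - k = n - (k + 1) + 1 := by omega
    rw [← ih (by omega), hnk, qFactorial_succ, prod_range_succ, ← hnk]
    ring

lemma qBinom_mul_qFactorial_mul_qFactorial (hq : ¬IsOfFinOrder q) {n k : ℕ} (hk : k ≤ n) :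
    qBinom q n k * qFactorial q k * qFactorial q (n - k) = qFactorial q n := by
  have hk0 := qFactorial_ne_zero hq k
  rw [qFactorial_eq_prod_range] at hk0
  rw [qBinom, prod_div_distrib, qFactorial_eq_prod_range q k, div_mul_cancel₀ _ hk0,
    prod_range_one_sub_pow_mul_qFactorial q hk]

lemma qBinom_symm (hq : ¬IsOfFinOrder q) {n k : ℕ} (hk : k ≤ n) :
    qBinom q n (n - k) = qBinom q n k := by
  have h := qBinom_mul_qFactorial_mul_qFactorial hq (Nat.sub_le n k)
  rw [Nat.sub_sub_self hk, ← qBinom_mul_qFactorial_mul_qFactorial hq hk] at h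
  apply mul_right_cancel₀ (mul_ne_zero (qFactorial_ne_zero hq k) (qFactorial_ne_zero hq (n - k)))
  linear_combination h

lemma qBinom_succ_mul_one_sub_pow (q : K) (n k : ℕ) :
    qBinom q (n + 1) k * (1 - q ^ (n + 1 - k)) = (1 - q ^ (n + 1)) * qBinom q n k := by
  simp only [qBinom, prod_div_distrib]
  rw [div_mul_eq_mul_div, ← prod_range_succ (fun i => 1 - q ^ (n + 1 - i)), prod_range_succ',
    mul_div_assoc, mul_comm]
  simp only [Nat.add_sub_add_right, Nat.sub_zero]
  ring

lemma qBinom_succ_succ_mul_one_sub_pow (hq : ¬IsOfFinOrder q) (n k : ℕ) :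
    qBinom q (n + 1) (k + 1) * (1 - q ^ (k + 1)) = (1 - q ^ (n + 1)) * qBinom q n k := by
  rw [qBinom, prod_range_succ, ← qBinom, mul_assoc,
    div_mul_cancel₀ _ (one_sub_pow_ne_zero hq k.succ_pos), qBinom_succ_mul_one_sub_pow]

lemma sum_qBinom_mul_pow_sub_pow (hq : ¬IsOfFinOrder q) (n : ℕ) (u v : K) :
    ∑ k ∈ range (n + 2), qBinom q (n + 1) k * (q ^ (n + 1 - k) - q ^ k) * u ^ (n + 1 - k) * v ^ k =
      (1 - q ^ (n + 1)) * (v - u) * rogersSzego q n u v := by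
  have hv : ∑ k ∈ range (n + 2), qBinom q (n + 1) k * (1 - q ^ k) * u ^ (n + 1 - k) * v ^ k =
      (1 - q ^ (n + 1)) * v * rogersSzego q n u v := by
    rw [sum_range_succ', rogersSzego, mul_sum]
    simp only [pow_zero, sub_self, mul_zero, zero_mul, add_zero]
    refine sum_congr rfl fun k _ => ?_
    rw [qBinom_succ_succ_mul_one_sub_pow hq, Nat.add_sub_add_right]
    ring
  have hu : ∑ k ∈ range (n + 2), qBinom q (n + 1) k * (1 - q ^ (n + 1 - k)) * u ^ (n + 1 - k) * v ^ k =
      (1 - q ^ (n + 1)) * u * rogersSzego q n u v := by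
    rw [sum_range_succ, rogersSzego, mul_sum]
    simp only [Nat.sub_self, pow_zero, sub_self, mul_zero, zero_mul, add_zero]
    refine sum_congr rfl fun k hk => ?_
    rw [qBinom_succ_mul_one_sub_pow, Nat.sub_add_comm (mem_range_succ_iff.mp hk)]
    ring
  calc _ = ∑ k ∈ range (n + 2), (qBinom q (n + 1) k * (1 - q ^ k) * u ^ (n + 1 - k) * v ^ k -
          qBinom q (n + 1) k * (1 - q ^ (n + 1 - k)) * u ^ (n + 1 - k) * v ^ k) :=
        sum_congr rfl fun k _ => by ring
    _ = _ := by rw [sum_sub_distrib, hv, hu]; ring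

lemma pow_mul_rogersSzego_sub (q : K) (n : ℕ) {t : K} (ht : t ≠ 0) (u v : K) :
    t ^ n * (rogersSzego q n (t * u) (t⁻¹ * v) - rogersSzego q n (t⁻¹ * u) (t * v)) =
      ∑ k ∈ range (n + 1), qBinom q n k * ((t ^ 2) ^ (n - k) - (t ^ 2) ^ k) * u ^ (n - k) * v ^ k := by
  rw [rogersSzego, rogersSzego, ← sum_sub_distrib, mul_sum]
  refine sum_congr rfl fun k hk => ?_
  obtain ⟨m, rfl⟩ := Nat.exists_eq_add_of_le (mem_range_succ_iff.mp hk)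
  rw [Nat.add_sub_cancel_left]
  simp only [mul_pow, inv_pow]
  field_simp
  ring

lemma rogersSzego_succ_dilate_sub {t : K} (ht : t ≠ 0) (htq : t ^ 2 = q) (hq : ¬IsOfFinOrder q)
    (n : ℕ) (u v : K) :
    t ^ (n + 1) * (rogersSzego q (n + 1) (t * u) (t⁻¹ * v) -
        rogersSzego q (n + 1) (t⁻¹ * u) (t * v)) =
      (1 - q ^ (n + 1)) * (v - u) * rogersSzego q n u v := by
  rw [pow_mul_rogersSzego_sub q (n + 1) ht, htq, ← sum_qBinom_mul_pow_sub_pow hq]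

end QBinomial

lemma sub_inv_ne_zero {K : Type*} [Field K] {x : K} (h0 : x ≠ 0) (h1 : x ≠ 1) (hm1 : x ≠ -1) :
    x - x⁻¹ ≠ 0 := by
  intro h
  have hsq : x * x = 1 := by
    rw [← mul_inv_cancel₀ h0]
    congr 1
    exact sub_eq_zero.mp h
  exact (mul_self_eq_one_iff.mp hsq).elim h1 hm1

lemma summable_pow_mul_pow_self {s : ℝ} (hs0 : 0 ≤ s) (hs1 : s < 1) (A : ℝ) :
    Summable fun n : ℕ => (s ^ n * A) ^ n := by
  have hlim : Tendsto (fun n : ℕ => s ^ n * A) atTop (𝓝 0) := by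
    simpa using (tendsto_pow_atTop_nhds_zero_of_lt_one hs0 hs1).mul_const A
  refine summable_geometric_two.of_norm_bounded_eventually_nat ?_
  filter_upwards [hlim.norm.eventually (ge_mem_nhds (by norm_num : ‖(0 : ℝ)‖ < 1 / 2))] with n hn
  rw [norm_pow]
  exact pow_le_pow_left₀ (norm_nonneg _) hn n

lemma rpow_natCast_div_four {q : ℝ} (hq : 0 ≤ q) (m : ℕ) :
    q ^ ((m : ℝ) / 4) = (q ^ ((1 : ℝ) / 4)) ^ m := by
  rw [← Real.rpow_mul_natCast hq]
  ring_nf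

lemma not_isOfFinOrder_ofReal {q : ℝ} (hq0 : 0 < q) (hq1 : q < 1) : ¬IsOfFinOrder (q : ℂ) := by
  rw [isOfFinOrder_iff_pow_eq_one]
  rintro ⟨n, hn, h⟩
  exact (pow_lt_one₀ hq0.le hq1 hn.ne').ne (by exact_mod_cast h)

lemma PbarA1_eq_rogersSzego {q : ℝ} (hq : ¬IsOfFinOrder (q : ℂ)) (n : ℕ) {Λ : ℂ} (hΛ : Λ ≠ 0) :
    PbarA1 q n Λ = rogersSzego (q : ℂ) n Λ Λ⁻¹ := by
  set b : ℕ → ℂ := fun k => qBinom (q : ℂ) n k * Λ ^ (n - k) * Λ⁻¹ ^ k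
  have hPbar : PbarA1 q n Λ = ∑ j ∈ range (n + 1),
      if 2 * j ≤ n then qBinom (q : ℂ) n j * Msym (n - 2 * j) Λ else 0 := by
    rw [← sum_filter, show (range (n + 1)).filter (fun j => 2 * j ≤ n) = insert 0 (Icc 1 (n / 2))
      by ext j; simp; omega, sum_insert (by simp)]
    simp [PbarA1, qBinom]
  -- `Msym (n - 2 * j)` splits into the monomials `k = j` and `k = n - j` of `rogersSzego`, whose
  -- coefficients agree by `qBinom_symm`.
  have hterm : ∀ j ∈ range (n + 1),
      (if 2 * j ≤ n then qBinom (q : ℂ) n j * Msym (n - 2 * j) Λ else 0) =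
        (if 2 * j ≤ n then b j else 0) + if n < 2 * (n - j) then b (n - j) else 0 := by
    intro j hj
    rcases lt_trichotomy (2 * j) n with hlt | heq | hgt
    · obtain ⟨m, rfl⟩ := Nat.exists_eq_add_of_lt hlt
      rw [if_pos hlt.le, if_pos hlt.le, if_pos (by omega), Msym, if_neg (by omega)]
      simp only [b]
      rw [show 2 * j + m + 1 - 2 * j = m + 1 by omega, show 2 * j + m + 1 - j = m + 1 + j by omega,
        show 2 * j + m + 1 - (m + 1 + j) = j by omega]
      have hsymm := qBinom_symm hq (show j ≤ 2 * j + m + 1 by omega)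
      rw [show 2 * j + m + 1 - j = m + 1 + j by omega] at hsymm
      rw [hsymm]
      simp only [pow_add, inv_pow]
      field_simp
    · subst heq
      rw [if_pos le_rfl, if_pos le_rfl, if_neg (by omega), Msym, if_pos (by omega), add_zero]
      simp only [b, show 2 * j - j = j by omega]
      rw [inv_pow, mul_assoc, mul_inv_cancel₀ (pow_ne_zero j hΛ), mul_one]
    · rw [if_neg hgt.not_ge, if_neg hgt.not_ge, if_neg (by omega), add_zero]
  have hreflect := sum_range_reflect (fun k => if n < 2 * k then b k else 0) (n + 1)
  simp only [Nat.add_sub_cancel] at hreflect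
  rw [hPbar, sum_congr rfl hterm, sum_add_distrib, hreflect, ← sum_add_distrib, rogersSzego]
  refine sum_congr rfl fun j _ => ?_
  by_cases h : 2 * j ≤ n <;> simp [h, b, not_le.mp]

section Bounds

variable {q : ℝ} (hq0 : 0 < q) (hq1 : q < 1)
include hq0 hq1

lemma norm_one_sub_ofReal_pow (m : ℕ) : ‖1 - (q : ℂ) ^ m‖ = 1 - q ^ m := by
  rw [← Complex.ofReal_pow, ← Complex.ofReal_one, ← Complex.ofReal_sub, Complex.norm_real,
    Real.norm_of_nonneg (sub_nonneg.mpr (pow_le_one₀ hq0.le hq1.le))]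

lemma norm_qBinom_le (n k : ℕ) : ‖qBinom (q : ℂ) n k‖ ≤ (1 - q)⁻¹ ^ k := by
  rw [qBinom, norm_prod]
  calc _ ≤ ∏ _i ∈ range k, (1 - q)⁻¹ := prod_le_prod (fun _ _ => norm_nonneg _) fun i _ => by
          rw [norm_div, norm_one_sub_ofReal_pow hq0 hq1, norm_one_sub_ofReal_pow hq0 hq1,
            inv_eq_one_div]
          exact div_le_div₀ zero_le_one (by linarith [pow_pos hq0 (n - i)]) (by linarith)
            (by linarith [pow_le_of_le_one (n := i + 1) hq0.le hq1.le (by omega)])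
    _ = _ := by rw [prod_const, card_range]

lemma norm_qFactorial_inv_le (n : ℕ) : ‖(qFactorial (q : ℂ) n)⁻¹‖ ≤ (1 - q)⁻¹ ^ n := by
  rw [norm_inv, inv_pow]
  refine inv_anti₀ (pow_pos (by linarith) n) ?_
  rw [qFactorial, norm_prod]
  calc (1 - q) ^ n = ∏ _j ∈ Icc 1 n, (1 - q) := by rw [prod_const, Nat.card_Icc, Nat.add_sub_cancel]
    _ ≤ _ := prod_le_prod (fun _ _ => by linarith) fun j hj => by
          rw [norm_one_sub_ofReal_pow hq0 hq1]
          linarith [pow_le_of_le_one hq0.le hq1.le (Nat.one_le_iff_ne_zero.mp (mem_Icc.mp hj).1)]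

lemma norm_rogersSzego_le {u v : ℂ} {R : ℝ} (hu : ‖u‖ ≤ R) (hv : ‖v‖ ≤ R) (n : ℕ) :
    ‖rogersSzego (q : ℂ) n u v‖ ≤ (n + 1) * ((1 - q)⁻¹ * R) ^ n := by
  have hK : 1 ≤ (1 - q)⁻¹ := one_le_inv₀ (by linarith) |>.mpr (by linarith)
  refine (norm_sum_le _ _).trans ?_
  refine (sum_le_card_nsmul _ _ (((1 - q)⁻¹ * R) ^ n) fun k hk => ?_).trans_eq
    (by rw [card_range, nsmul_eq_mul, Nat.cast_succ])
  have hkn := mem_range_succ_iff.mp hk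
  rw [norm_mul, norm_mul, norm_pow, norm_pow, mul_pow, mul_assoc,
    ← Nat.sub_add_cancel hkn, pow_add R, Nat.add_sub_cancel]
  gcongr
  · exact norm_qBinom_le hq0 hq1 _ _ |>.trans (pow_le_pow_right₀ hK (Nat.le_add_left k (n - k)))
  · exact pow_nonneg ((norm_nonneg u).trans hu) _

end Bounds

def whitA1Term (q : ℝ) (X Λ : ℂ) (n : ℕ) : ℂ :=
  ((q ^ ((n : ℝ) ^ 2 / 4) : ℝ) : ℂ) * X ^ n * PbarA1 q n Λ / qFactorial (q : ℂ) n

lemma whitA1_eq_tsum (q : ℝ) (X Λ : ℂ) : whitA1 q X Λ = ∑' n, whitA1Term q X Λ n := rfl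

lemma whitA1Term_zero (q : ℝ) (X Λ : ℂ) : whitA1Term q X Λ 0 = 1 := by
  simp [whitA1Term, PbarA1, Msym, qFactorial]

section WhittakerTerms

variable {q : ℝ} (hq0 : 0 < q) (hq1 : q < 1)
include hq0 hq1

lemma summable_whitA1Term (X : ℂ) {Λ : ℂ} (hΛ : Λ ≠ 0) : Summable (whitA1Term q X Λ) := by
  set K := (1 - q)⁻¹
  set R := max ‖Λ‖ ‖Λ⁻¹‖
  refine (summable_pow_mul_pow_self (s := q ^ ((1 : ℝ) / 4)) (Real.rpow_nonneg hq0.le _)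
    (Real.rpow_lt_one hq0.le hq1 (by norm_num)) (2 * ‖X‖ * K * R * K)).of_norm_bounded fun n => ?_
  rw [whitA1Term, PbarA1_eq_rogersSzego (not_isOfFinOrder_ofReal hq0 hq1) n hΛ, div_eq_mul_inv,
    norm_mul, norm_mul, norm_mul, norm_pow, Complex.norm_real,
    Real.norm_of_nonneg (Real.rpow_nonneg hq0.le _), ← Nat.cast_pow, rpow_natCast_div_four hq0.le]
  have hP := norm_rogersSzego_le hq0 hq1 (le_max_left ‖Λ‖ ‖Λ⁻¹‖) (le_max_right _ _) n
  have htwo : (n : ℝ) + 1 ≤ 2 ^ n := by exact_mod_cast Nat.lt_two_pow_self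
  calc _ ≤ (q ^ ((1 : ℝ) / 4)) ^ (n ^ 2) * ‖X‖ ^ n * ((n + 1) * (K * R) ^ n) * K ^ n := by
        gcongr
        · exact norm_qFactorial_inv_le hq0 hq1 n
    _ ≤ (q ^ ((1 : ℝ) / 4)) ^ (n ^ 2) * ‖X‖ ^ n * (2 ^ n * (K * R) ^ n) * K ^ n := by gcongr
    _ = _ := by ring

lemma whitA1Term_succ_dilate_sub (X : ℂ) {Λ : ℂ} (hΛ : Λ ≠ 0) (n : ℕ) :
    -((q ^ ((1 : ℝ) / 4) : ℝ) : ℂ) *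
      (whitA1Term q X (((q ^ ((1 : ℝ) / 2) : ℝ) : ℂ) * Λ) (n + 1) -
        whitA1Term q X (((q ^ (-(1 : ℝ) / 2) : ℝ) : ℂ) * Λ) (n + 1)) =
      (Λ - Λ⁻¹) * (X * whitA1Term q X Λ n) := by
  set s : ℝ := q ^ ((1 : ℝ) / 4)
  have hpow (m : ℕ) : q ^ ((m : ℝ) / 4) = s ^ m := rpow_natCast_div_four hq0.le m
  have hs : (s : ℂ) ≠ 0 := Complex.ofReal_ne_zero.mpr (Real.rpow_pos_of_pos hq0 _).ne'
  have hhalf : q ^ ((1 : ℝ) / 2) = s ^ 2 := by rw [← hpow]; norm_num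
  have hmhalf : q ^ (-(1 : ℝ) / 2) = (s ^ 2)⁻¹ := by rw [neg_div, Real.rpow_neg hq0.le, hhalf]
  have hq : ((s : ℂ) ^ 2) ^ 2 = q := by
    rw [← pow_mul]; exact_mod_cast (by rw [← hpow]; norm_num)
  have hqn := not_isOfFinOrder_ofReal hq0 hq1
  have key := rogersSzego_succ_dilate_sub (pow_ne_zero 2 hs) hq hqn n Λ Λ⁻¹
  simp only [whitA1Term, ← Nat.cast_pow, hpow, hhalf, hmhalf, Complex.ofReal_pow, Complex.ofReal_inv]
  rw [PbarA1_eq_rogersSzego hqn _ (mul_ne_zero (pow_ne_zero 2 hs) hΛ),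
    PbarA1_eq_rogersSzego hqn _ (mul_ne_zero (inv_ne_zero (pow_ne_zero 2 hs)) hΛ),
    PbarA1_eq_rogersSzego hqn n hΛ, mul_inv, mul_inv, inv_inv, qFactorial_succ]
  generalize rogersSzego (q : ℂ) (n + 1) _ _ = A at key ⊢
  generalize rogersSzego (q : ℂ) (n + 1) _ _ = B at key ⊢
  generalize rogersSzego (q : ℂ) n Λ Λ⁻¹ = C at key ⊢
  have hF := qFactorial_ne_zero hqn n
  have hq' := one_sub_pow_ne_zero hqn n.succ_pos
  field_simp
  linear_combination (-(s : ℂ) ^ n ^ 2 * X ^ (n + 1) * Λ) * key -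
    (s : ℂ) ^ n ^ 2 * X ^ (n + 1) * (1 - (q : ℂ) ^ (n + 1)) * C * mul_inv_cancel₀ hΛ

end WhittakerTerms

/-- the dual difference equation for the global q-Whittaker function. -/
theorem whitA1_dual_difference (q : ℝ) (hq0 : 0 < q) (hq1 : q < 1)
    (X Λ : ℂ) (hΛ : Λ ∉ ({0, 1, -1} : Set ℂ)) :
    -((q ^ ((1 : ℝ) / 4) : ℝ) : ℂ) *
      (whitA1 q X (((q ^ ((1 : ℝ) / 2) : ℝ) : ℂ) * Λ) -
       whitA1 q X (((q ^ (-(1 : ℝ) / 2) : ℝ) : ℂ) * Λ)) / (Λ - Λ⁻¹) =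
    X * whitA1 q X Λ := by
  simp only [Set.mem_insert_iff, Set.mem_singleton_iff, not_or] at hΛ
  obtain ⟨hΛ0, hΛ1, hΛm1⟩ := hΛ
  have hsum (x : ℝ) : Summable (whitA1Term q X (((q ^ x : ℝ) : ℂ) * Λ)) :=
    summable_whitA1Term hq0 hq1 X
      (mul_ne_zero (Complex.ofReal_ne_zero.mpr (Real.rpow_pos_of_pos hq0 x).ne') hΛ0)
  have htelescope : HasSum (fun n => -((q ^ ((1 : ℝ) / 4) : ℝ) : ℂ) *
      (whitA1Term q X (((q ^ ((1 : ℝ) / 2) : ℝ) : ℂ) * Λ) n -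
        whitA1Term q X (((q ^ (-(1 : ℝ) / 2) : ℝ) : ℂ) * Λ) n))
      ((Λ - Λ⁻¹) * (X * whitA1 q X Λ)) := by
    rw [← hasSum_nat_add_iff' 1]
    simp only [whitA1Term_succ_dilate_sub hq0 hq1 X hΛ0, sum_range_one, whitA1Term_zero, sub_self,
      mul_zero, sub_zero]
    exact ((summable_whitA1Term hq0 hq1 X hΛ0).hasSum.mul_left X).mul_left (Λ - Λ⁻¹)
  rw [div_eq_iff (sub_inv_ne_zero hΛ0 hΛ1 hΛm1), whitA1_eq_tsum q X (_ * Λ),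
    whitA1_eq_tsum q X (_ * Λ), ← (hsum _).tsum_sub (hsum _), ← tsum_mul_left, htelescope.tsum_eq]
  ring

end
end

section
/- Fix a real number q with 0 < q < 1 and a complex number s with 0 < |s| < 1, and set t = s². For all integers m, n ≥ 0, the duality formula for the symmetric Macdonald polynomials of type A₁ holds: P_m(s q^{n/2}; q, t) · P_n(s; q, t) = P_n(s q^{m/2}; q, t) · P_m(s; q, t). (Formula (2.31) of the paper in the rank-one case.) -/
open scoped BigOperators
open Filter

noncomputable section

/-!
Put `w a = (t; q)_a / (q; q)_a` and `R_n(X, Y) = ∑_{a + b = n} w a w b X^a Y^b`, a homogeneous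
form of degree `n` with `P_n(X) = R_n(X, X⁻¹) / w n`. By homogeneity both sides of the duality
become multiples of `R_m(t qⁿ, 1) R_n(t, 1)` and `R_n(t qᵐ, 1) R_m(t, 1)` by the same factor, so `s`
and the half-integer powers of `q` drop out. For fixed `m`, both sequences in `n` satisfy one
second-order recurrence: `n ↦ R_n(t qᵐ, 1)` by the three-term recurrence of `R_n`, and
`n ↦ R_m(t qⁿ, 1) R_n(t, 1)` by the `q`-difference equation of `R_m` in its first variable together
with the evaluation `R_n(t, 1) = (t²; q)_n / (q; q)_n`. They agree at `n = 0, 1`, hence everywhere.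
-/

open Finset

theorem eq_of_second_order_recurrence {R : Type*} [CommRing R] [IsDomain R] {f g : ℕ → R}
    (a b c : ℕ → R) (ha : ∀ n, a n ≠ 0)
    (hf : ∀ n, a n * f (n + 2) = b n * f (n + 1) + c n * f n)
    (hg : ∀ n, a n * g (n + 2) = b n * g (n + 1) + c n * g n)
    (h0 : f 0 = g 0) (h1 : f 1 = g 1) : f = g := by
  funext n
  induction n using Nat.twoStepInduction with
  | zero => exact h0
  | one => exact h1
  | more n ih0 ih1 => exact mul_left_cancel₀ (ha n) (by rw [hf, hg, ih0, ih1])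

theorem Finset.Nat.sum_antidiagonal_shift {M : Type*} [AddCommMonoid M] {m : ℕ} {f : ℕ × ℕ → M}
    (h0 : f (0, m + 1) = 0) (h1 : f (m + 1, 0) = 0) :
    ∑ p ∈ antidiagonal m, f (p.1 + 1, p.2) = ∑ p ∈ antidiagonal m, f (p.1, p.2 + 1) := by
  have := Nat.sum_antidiagonal_succ (n := m) (f := f)
  rw [Nat.sum_antidiagonal_succ', h0, h1, zero_add, zero_add] at this
  exact this.symm

theorem Finset.sum_range_succ_eq_sum_range_half {M : Type*} [AddCommMonoid M] (f : ℕ → M)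
    (n : ℕ) : ∑ k ∈ range (n + 1), f k =
      ∑ j ∈ range (n / 2 + 1), if n - 2 * j = 0 then f j else f j + f (n - j) := by
  induction n using Nat.strong_induction_on generalizing f with
  | _ n ih =>
  match n with
  | 0 => simp
  | 1 => simp [sum_range_succ]
  | n + 2 =>
    rw [sum_range_succ' f (n + 2), sum_range_succ (fun k => f (k + 1)) (n + 1),
      ih n (by omega) (fun k => f (k + 1)), show (n + 2) / 2 + 1 = n / 2 + 1 + 1 by omega]
    conv_rhs => rw [sum_range_succ', if_neg (by omega), Nat.sub_zero]
    rw [add_assoc, add_comm (f _)]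
    congr 1
    refine sum_congr rfl fun j hj => ?_
    rw [mem_range] at hj
    rw [show n + 2 - 2 * (j + 1) = n - 2 * j by omega, show n + 2 - (j + 1) = n - j + 1 by omega]

section RogersHom

variable {K : Type*} [Field K] {q t : K}

def rogersWeight (q t : K) (a : ℕ) : K :=
  ∏ i ∈ range a, (1 - t * q ^ i) / (1 - q ^ (i + 1))

def rogersHom (q t : K) (n : ℕ) (X Y : K) : K :=
  ∑ p ∈ antidiagonal n, rogersWeight q t p.1 * rogersWeight q t p.2 * X ^ p.1 * Y ^ p.2

@[simp]
theorem rogersWeight_zero : rogersWeight q t 0 = 1 := by simp [rogersWeight]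

theorem rogersWeight_succ (hq : ∀ a : ℕ, 1 - q ^ (a + 1) ≠ 0) (a : ℕ) :
    (1 - q ^ (a + 1)) * rogersWeight q t (a + 1) = (1 - t * q ^ a) * rogersWeight q t a := by
  rw [rogersWeight, prod_range_succ, mul_comm, mul_assoc, div_mul_cancel₀ _ (hq a), mul_comm,
    rogersWeight]

theorem rogersWeight_ne_zero (hq : ∀ a : ℕ, 1 - q ^ (a + 1) ≠ 0) (ht : ∀ a : ℕ, 1 - t * q ^ a ≠ 0)
    (a : ℕ) : rogersWeight q t a ≠ 0 :=
  prod_ne_zero_iff.2 fun i _ => div_ne_zero (ht i) (hq i)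

@[simp]
theorem rogersHom_zero (X Y : K) : rogersHom q t 0 X Y = 1 := by simp [rogersHom]

theorem rogersHom_one (X Y : K) : rogersHom q t 1 X Y = rogersWeight q t 1 * (X + Y) := by
  simp [rogersHom, Nat.sum_antidiagonal_succ]
  ring

theorem rogersHom_mul_mul (n : ℕ) (c X Y : K) :
    rogersHom q t n (c * X) (c * Y) = c ^ n * rogersHom q t n X Y := by
  rw [rogersHom, rogersHom, mul_sum]
  refine sum_congr rfl fun p hp => ?_
  rw [← mem_antidiagonal.1 hp]
  ring

theorem rogersHom_qDifference (hq : ∀ a : ℕ, 1 - q ^ (a + 1) ≠ 0) (m : ℕ) (X Y : K) :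
    (Y - t * X) * rogersHom q t m (q * X) Y - (X - t * Y) * rogersHom q t m X (q * Y) =
      (1 + t * q ^ m) * (Y - X) * rogersHom q t m X Y := by
  -- Coefficientwise the difference is `v (a + 1) v b - v a v (b + 1)`, and `v 0 = 0`.
  set v : ℕ → K := fun a => (1 - q ^ a) * rogersWeight q t a
  have hv (a : ℕ) : v (a + 1) = (1 - t * q ^ a) * rogersWeight q t a := rogersWeight_succ hq a
  have hshift := Nat.sum_antidiagonal_shift (m := m)
    (f := fun p => v p.1 * v p.2 * X ^ p.1 * Y ^ p.2) (by simp [v]) (by simp [v])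
  rw [← sub_eq_zero, ← sub_eq_zero.2 hshift]
  simp only [rogersHom, mul_sum, ← sum_sub_distrib]
  refine sum_congr rfl fun p hp => ?_
  rw [← mem_antidiagonal.1 hp, hv, hv]
  ring

theorem rogersHom_three_term (hq : ∀ a : ℕ, 1 - q ^ (a + 1) ≠ 0) (n : ℕ) (X Y : K) :
    (1 - t * q ^ (n + 1)) * (X + Y) * rogersHom q t (n + 1) X Y =
      (1 - q ^ (n + 2)) * rogersHom q t (n + 2) X Y +
        (1 - t ^ 2 * q ^ n) * (X * Y) * rogersHom q t n X Y := by
  set w := rogersWeight q t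
  have hw : ∀ a, (1 - q ^ (a + 1)) * w (a + 1) = (1 - t * q ^ a) * w a := rogersWeight_succ hq
  have hX : X * rogersHom q t (n + 1) X Y = w (n + 1) * X ^ (n + 2) +
      ∑ p ∈ antidiagonal n, w p.1 * w (p.2 + 1) * X ^ (p.1 + 1) * Y ^ (p.2 + 1) := by
    rw [rogersHom, Nat.sum_antidiagonal_succ', mul_add, mul_sum]
    simp only [rogersWeight_zero]
    congr 1
    · ring
    · exact sum_congr rfl fun p _ => by ring
  have hY : Y * rogersHom q t (n + 1) X Y = w (n + 1) * Y ^ (n + 2) +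
      ∑ p ∈ antidiagonal n, w (p.1 + 1) * w p.2 * X ^ (p.1 + 1) * Y ^ (p.2 + 1) := by
    rw [rogersHom, Nat.sum_antidiagonal_succ, mul_add, mul_sum]
    simp only [rogersWeight_zero]
    congr 1
    · ring
    · exact sum_congr rfl fun p _ => by ring
  have h2 : rogersHom q t (n + 2) X Y = w (n + 2) * (X ^ (n + 2) + Y ^ (n + 2)) +
      ∑ p ∈ antidiagonal n, w (p.1 + 1) * w (p.2 + 1) * X ^ (p.1 + 1) * Y ^ (p.2 + 1) := by
    rw [rogersHom, Nat.sum_antidiagonal_succ, Nat.sum_antidiagonal_succ']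
    simp only [rogersWeight_zero]
    ring
  have h0 : X * Y * rogersHom q t n X Y =
      ∑ p ∈ antidiagonal n, w p.1 * w p.2 * X ^ (p.1 + 1) * Y ^ (p.2 + 1) := by
    rw [rogersHom, mul_sum]
    exact sum_congr rfl fun p _ => by ring
  have hterm : ∀ p ∈ antidiagonal n,
      (1 - t * q ^ (n + 1)) * (w p.1 * w (p.2 + 1) * X ^ (p.1 + 1) * Y ^ (p.2 + 1) +
        w (p.1 + 1) * w p.2 * X ^ (p.1 + 1) * Y ^ (p.2 + 1)) =
      (1 - q ^ (n + 2)) * (w (p.1 + 1) * w (p.2 + 1) * X ^ (p.1 + 1) * Y ^ (p.2 + 1)) +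
        (1 - t ^ 2 * q ^ n) * (w p.1 * w p.2 * X ^ (p.1 + 1) * Y ^ (p.2 + 1)) := by
    rintro ⟨a, b⟩ hab
    rw [← mem_antidiagonal.1 hab]
    linear_combination (X ^ (a + 1) * Y ^ (b + 1)) *
      ((w b - w (b + 1)) * hw a + (t * q ^ a * w a - q ^ (a + 1) * w (a + 1)) * hw b)
  have hsum := sum_congr rfl hterm
  simp only [← mul_sum, sum_add_distrib] at hsum
  rw [mul_assoc, add_mul, hX, hY, h2, mul_assoc (1 - t ^ 2 * q ^ n), h0]
  linear_combination hsum - (X ^ (n + 2) + Y ^ (n + 2)) * hw (n + 1)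

/-- The `q`-Chu–Vandermonde identity `∑_{a+b=n} w a w b t^a = (t²; q)_n / (q; q)_n`. -/
theorem rogersHom_self_one (hq : ∀ a : ℕ, 1 - q ^ (a + 1) ≠ 0) (n : ℕ) :
    rogersHom q t n t 1 = rogersWeight q (t ^ 2) n := by
  refine congrFun (eq_of_second_order_recurrence (f := fun n => rogersHom q t n t 1)
    (fun n => 1 - q ^ (n + 2)) (fun n => (1 - t * q ^ (n + 1)) * (1 + t))
    (fun n => -(t * (1 - t ^ 2 * q ^ n))) (fun n => hq (n + 1)) (fun n => ?_) (fun n => ?_)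
    (by simp) ?_) n
  · linear_combination -(rogersHom_three_term (t := t) hq n t 1)
  · linear_combination rogersWeight_succ (t := t ^ 2) hq (n + 1) -
      t * rogersWeight_succ (t := t ^ 2) hq n
  · refine mul_left_cancel₀ (hq 0) ?_
    simp only [rogersHom_one, ← mul_assoc, rogersWeight_succ hq 0, rogersWeight_zero]
    ring

theorem rogersHom_duality (hq : ∀ a : ℕ, 1 - q ^ (a + 1) ≠ 0) (m n : ℕ) :
    rogersHom q t m (t * q ^ n) 1 * rogersHom q t n t 1 =
      rogersHom q t n (t * q ^ m) 1 * rogersHom q t m t 1 := by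
  simp only [rogersHom_self_one hq]
  set W := rogersWeight q (t ^ 2)
  have hW : ∀ a, (1 - q ^ (a + 1)) * W (a + 1) = (1 - t ^ 2 * q ^ a) * W a := rogersWeight_succ hq
  refine congrFun (eq_of_second_order_recurrence (f := fun n => rogersHom q t m (t * q ^ n) 1 * W n)
    (g := fun n => rogersHom q t n (t * q ^ m) 1 * W m)
    (fun n => 1 - q ^ (n + 2)) (fun n => (1 - t * q ^ (n + 1)) * (1 + t * q ^ m))
    (fun n => -(t * q ^ m * (1 - t ^ 2 * q ^ n))) (fun n => hq (n + 1)) (fun n => ?_) (fun n => ?_)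
    ?_ ?_) n
  · have hqd := rogersHom_qDifference (t := t) hq m (t * q ^ (n + 1)) 1
    have hhom :
        rogersHom q t m (t * q ^ (n + 1)) (q * 1) = q ^ m * rogersHom q t m (t * q ^ n) 1 := by
      rw [← rogersHom_mul_mul, mul_left_comm, ← pow_succ']
    rw [hhom, show q * (t * q ^ (n + 1)) = t * q ^ (n + 2) by ring] at hqd
    linear_combination rogersHom q t m (t * q ^ (n + 2)) 1 * hW (n + 1) + W (n + 1) * hqd -
      t * q ^ m * rogersHom q t m (t * q ^ n) 1 * hW n
  · linear_combination -W m * rogersHom_three_term (t := t) hq n (t * q ^ m) 1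
  · simp [W, rogersHom_self_one hq]
  · have hW1 : (1 - q) * W 1 = 1 - t ^ 2 := by simpa [W] using hW 0
    have hw1 : (1 - q) * rogersWeight q t 1 = 1 - t := by
      simpa using rogersWeight_succ (t := t) hq 0
    have hqd : (1 - t ^ 2) * rogersHom q t m (t * q) 1 = (1 + t * q ^ m) * (1 - t) * W m := by
      simpa [mul_comm q t, ← sq, rogersHom_self_one hq] using
        rogersHom_qDifference (t := t) hq m t 1
    refine mul_left_cancel₀ (hq 0) ?_
    simp only [rogersHom_one, zero_add, pow_one]
    linear_combination rogersHom q t m (t * q) 1 * hW1 + hqd - (t * q ^ m + 1) * W m * hw1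

def rogersA1Coeff (q t : K) (n j : ℕ) : K :=
  ∏ i ∈ range j, ((1 - q ^ (n - i)) * (1 - t * q ^ i)) /
    ((1 - q ^ (1 + i)) * (1 - t * q ^ (n - i - 1)))

theorem rogersA1Coeff_mul_rogersWeight (hq : ∀ a : ℕ, 1 - q ^ (a + 1) ≠ 0)
    (ht : ∀ a : ℕ, 1 - t * q ^ a ≠ 0) {n j : ℕ} (hj : j ≤ n) :
    rogersA1Coeff q t n j * rogersWeight q t n = rogersWeight q t j * rogersWeight q t (n - j) := by
  induction j with
  | zero => simp [rogersA1Coeff]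
  | succ j ih =>
    obtain ⟨k, hk⟩ : ∃ k, n - j = k + 1 := ⟨n - j - 1, by omega⟩
    rw [rogersA1Coeff, prod_range_succ, mul_right_comm, ← rogersA1Coeff, ih (by omega), hk,
      show n - (j + 1) = k by omega, Nat.add_sub_cancel, add_comm 1 j, mul_div_assoc',
      div_eq_iff (mul_ne_zero (hq j) (ht k))]
    linear_combination (1 - t * q ^ j) * rogersWeight q t j * rogersWeight_succ (t := t) hq k -
      (1 - t * q ^ k) * rogersWeight q t k * rogersWeight_succ (t := t) hq j

end RogersHom

theorem one_sub_pow_succ_ne_zero {q : ℝ} (hq0 : 0 ≤ q) (hq1 : q < 1) (a : ℕ) :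
    1 - (q : ℂ) ^ (a + 1) ≠ 0 := by
  rw [sub_ne_zero]
  exact_mod_cast (pow_lt_one₀ hq0 hq1 a.succ_ne_zero).ne'

theorem one_sub_mul_pow_ne_zero {q : ℝ} {t : ℂ} (hq0 : 0 ≤ q) (hq1 : q ≤ 1) (ht : ‖t‖ < 1)
    (a : ℕ) : 1 - t * (q : ℂ) ^ a ≠ 0 := by
  refine sub_ne_zero.2 (ne_of_apply_ne norm (ne_of_gt ?_))
  rw [norm_one, norm_mul, norm_pow, Complex.norm_real, Real.norm_of_nonneg hq0]
  exact mul_lt_one_of_nonneg_of_lt_one_left (norm_nonneg t) ht (pow_le_one₀ hq0 hq1)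

theorem rogersA1_eq_sum_range (q : ℝ) (t : ℂ) (n : ℕ) (X : ℂ) :
    RogersA1 q t n X =
      ∑ j ∈ range (n / 2 + 1), rogersA1Coeff (q : ℂ) t n j * Msym (n - 2 * j) X := by
  rw [RogersA1, range_eq_Ico, sum_eq_sum_Ico_succ_bot (Nat.succ_pos _)]
  simp [rogersA1Coeff, Ico_add_one_right_eq_Icc]

theorem rogersA1_mul_rogersWeight {q : ℝ} {t : ℂ} (hq : ∀ a : ℕ, 1 - (q : ℂ) ^ (a + 1) ≠ 0)
    (ht : ∀ a : ℕ, 1 - t * (q : ℂ) ^ a ≠ 0) (n : ℕ) {X : ℂ} (hX : X ≠ 0) :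
    RogersA1 q t n X * rogersWeight (q : ℂ) t n = rogersHom (q : ℂ) t n X X⁻¹ := by
  rw [rogersHom, Nat.sum_antidiagonal_eq_sum_range_succ_mk, sum_range_succ_eq_sum_range_half,
    rogersA1_eq_sum_range, sum_mul]
  refine sum_congr rfl fun j hj => ?_
  obtain ⟨d, rfl⟩ : ∃ d, n = d + 2 * j := ⟨n - 2 * j, by rw [mem_range] at hj; omega⟩
  rw [mul_right_comm, rogersA1Coeff_mul_rogersWeight hq ht (by omega),
    show d + 2 * j - 2 * j = d by omega, show d + 2 * j - j = d + j by omega,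
    show d + 2 * j - (d + j) = j by omega]
  have hXj : X ^ j * X⁻¹ ^ j = 1 := by rw [← mul_pow, mul_inv_cancel₀ hX, one_pow]
  split_ifs with hd
  · subst hd
    simp [Msym, hX]
  · rw [Msym, if_neg hd]
    linear_combination -rogersWeight (q : ℂ) t j * rogersWeight (q : ℂ) t (d + j) *
      (X ^ d + X⁻¹ ^ d) * hXj

theorem rogersA1_eq {q : ℝ} {t : ℂ} (hq : ∀ a : ℕ, 1 - (q : ℂ) ^ (a + 1) ≠ 0)
    (ht : ∀ a : ℕ, 1 - t * (q : ℂ) ^ a ≠ 0) (n : ℕ) {X : ℂ} (hX : X ≠ 0) :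
    RogersA1 q t n X = X⁻¹ ^ n * rogersHom (q : ℂ) t n (X ^ 2) 1 / rogersWeight (q : ℂ) t n := by
  rw [eq_div_iff (rogersWeight_ne_zero hq ht n), rogersA1_mul_rogersWeight hq ht n hX,
    ← rogersHom_mul_mul, mul_one, pow_two, inv_mul_cancel_left₀ hX]

/-- the duality formula for the symmetric Macdonald polynomials of type A₁. -/
theorem rogersA1_duality (q : ℝ) (hq0 : 0 < q) (hq1 : q < 1)
    (s : ℂ) (hs0 : s ≠ 0) (hs1 : ‖s‖ < 1) (m n : ℕ) :
    RogersA1 q (s ^ 2) m (s * ((q ^ ((n : ℝ) / 2) : ℝ) : ℂ)) * RogersA1 q (s ^ 2) n s =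
    RogersA1 q (s ^ 2) n (s * ((q ^ ((m : ℝ) / 2) : ℝ) : ℂ)) * RogersA1 q (s ^ 2) m s := by
  have hq := one_sub_pow_succ_ne_zero hq0.le hq1
  have ht := one_sub_mul_pow_ne_zero (t := s ^ 2) hq0.le hq1.le
    (by rw [norm_pow]; exact pow_lt_one₀ (norm_nonneg s) hs1 two_ne_zero)
  have hhalf (k l : ℕ) : (q ^ ((k : ℝ) / 2)) ^ l = q ^ ((k : ℝ) * l / 2) := by
    rw [← Real.rpow_natCast, ← Real.rpow_mul hq0.le]
    ring_nf
  have hsq (k : ℕ) : (s * ((q ^ ((k : ℝ) / 2) : ℝ) : ℂ)) ^ 2 = s ^ 2 * (q : ℂ) ^ k := by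
    rw [mul_pow, ← Complex.ofReal_pow, hhalf, Nat.cast_two, mul_div_cancel_right₀ _ two_ne_zero,
      Real.rpow_natCast, Complex.ofReal_pow]
  have hcross : ((q ^ ((n : ℝ) / 2) : ℝ) : ℂ) ^ m = ((q ^ ((m : ℝ) / 2) : ℝ) : ℂ) ^ n := by
    rw [← Complex.ofReal_pow, ← Complex.ofReal_pow, hhalf, hhalf, mul_comm]
  have hX (k : ℕ) : s * ((q ^ ((k : ℝ) / 2) : ℝ) : ℂ) ≠ 0 :=
    mul_ne_zero hs0 (Complex.ofReal_ne_zero.2 (Real.rpow_pos_of_pos hq0 _).ne')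
  rw [rogersA1_eq hq ht m (hX n), rogersA1_eq hq ht n (hX m), rogersA1_eq hq ht n hs0,
    rogersA1_eq hq ht m hs0, hsq, hsq]
  simp only [mul_inv, mul_pow, inv_pow, hcross]
  linear_combination (s⁻¹ ^ m * (((q ^ ((m : ℝ) / 2) : ℝ) : ℂ) ^ n)⁻¹ * s⁻¹ ^ n /
    (rogersWeight (q : ℂ) (s ^ 2) m * rogersWeight (q : ℂ) (s ^ 2) n)) *
    rogersHom_duality (t := s ^ 2) hq m n

end
end
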